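/- Let (X, ≠q) be a hereditary quantum set and S ∈ 𝒬(X). Then S is q-central (i.e., S q-commutes with every T ∈ 𝒬(X)) if and only if the only element of 𝒬(X) contained in X \ (S ∪ Sᶜ) is the empty set. -/
import Mathlib


/-- The q-complement of a subset `D` with respect to a relation `q`. -/
def qCompl {X : Type*} (q : X → X → Prop) (D : Set X) : Set X :=
  {y | ∀ z ∈ D, q y z}

/-- The collection of q-subsets of a quantum set. -/
def qSubsets {X : Type*} (q : X → X → Prop) : Set (Set X) :=
  {S | S = qCompl q (qCompl q S)}

/-- A quantum set is hereditary if for every q-subset `T`, the q-subsets of `X`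
contained in `T` are exactly the q-subsets of `T` for the restricted relation. -/
def Hereditary {X : Type*} (q : X → X → Prop) : Prop :=
  ∀ T ∈ qSubsets q, ∀ S : Set X,
    (S ∈ qSubsets q ∧ S ⊆ T) ↔ (S ⊆ T ∧ S = qCompl q (qCompl q S ∩ T) ∩ T)

/-- Two subsets `C`, `D` of a quantum set q-commute if
`C ∩ (C ∩ D)ᶜ ⊆ (D ∩ (C ∩ D)ᶜ)ᶜ`. -/
def QCommutes {X : Type*} (q : X → X → Prop) (C D : Set X) : Prop :=
  C ∩ qCompl q (C ∩ D) ⊆ qCompl q (D ∩ qCompl q (C ∩ D))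

section Aux

variable {X : Type*} {q : X → X → Prop}

lemma qCompl_anti {C D : Set X} (h : C ⊆ D) : qCompl q D ⊆ qCompl q C :=
  fun _ hy z hz => hy z (h hz)

lemma subset_qCompl_qCompl (hsymm : ∀ x y, q x y → q y x) (D : Set X) :
    D ⊆ qCompl q (qCompl q D) :=
  fun x hx z hz => hsymm _ _ (hz x hx)

lemma qCompl_mem_qSubsets (hsymm : ∀ x y, q x y → q y x) (D : Set X) :
    qCompl q D ∈ qSubsets q :=
  Set.Subset.antisymm (subset_qCompl_qCompl hsymm _)
    (qCompl_anti (subset_qCompl_qCompl hsymm D))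

lemma inter_mem_qSubsets (hsymm : ∀ x y, q x y → q y x) {C D : Set X}
    (hC : C ∈ qSubsets q) (hD : D ∈ qSubsets q) : C ∩ D ∈ qSubsets q := by
  refine Set.Subset.antisymm (subset_qCompl_qCompl hsymm _) ?_
  intro x hx
  constructor
  · have := qCompl_anti (q := q) (qCompl_anti (q := q)
      (Set.inter_subset_left (s := C) (t := D))) hx
    rwa [← hC] at this
  · have := qCompl_anti (q := q) (qCompl_anti (q := q)
      (Set.inter_subset_right (s := C) (t := D))) hx
    rwa [← hD] at this

lemma not_mem_self_qCompl (hne : ∀ x y, q x y → x ≠ y) {D : Set X} {x : X}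
    (h1 : x ∈ D) (h2 : x ∈ qCompl q D) : False :=
  hne x x (h2 x h1) rfl

lemma qCompl_empty : qCompl q (∅ : Set X) = Set.univ := by
  ext x; simp [qCompl]

end Aux

/-- In a hereditary quantum set, a q-subset `S` is q-central (q-commutes with every
q-subset) if and only if the only q-subset contained in `X \ (S ∪ Sᶜ)` is `∅`. -/
theorem qcentral_iff_no_qsubset_outside {X : Type*} (q : X → X → Prop)
    (hsymm : ∀ x y, q x y → q y x) (hne : ∀ x y, q x y → x ≠ y)
    (hhered : Hereditary q) (S : Set X) (hS : S ∈ qSubsets q) :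
    (∀ T ∈ qSubsets q, QCommutes q S T) ↔
      ∀ R ∈ qSubsets q, R ⊆ Set.univ \ (S ∪ qCompl q S) → R = ∅ := by
  constructor
  · intro hcent R hR hRsub
    have hSR : S ∩ R = ∅ := by
      ext x
      simp only [Set.mem_inter_iff, Set.mem_empty_iff_false, iff_false]
      rintro ⟨hxS, hxR⟩
      exact (hRsub hxR).2 (Or.inl hxS)
    have h := hcent R hR
    unfold QCommutes at h
    rw [hSR, qCompl_empty, Set.inter_univ, Set.inter_univ] at h
    -- h : S ⊆ qCompl q R, so R = Rᶜᶜ ⊆ Sᶜ; but R avoids Sᶜ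
    have hR' : R ⊆ qCompl q S := by
      rw [hR]
      exact qCompl_anti h
    ext x
    simp only [Set.mem_empty_iff_false, iff_false]
    intro hx
    exact (hRsub hx).2 (Or.inr (hR' hx))
  · intro hH T hT
    set M := qCompl q (S ∩ T) with hM
    set B := T ∩ M with hB
    have hBq : B ∈ qSubsets q :=
      inter_mem_qSubsets hsymm hT (qCompl_mem_qSubsets hsymm _)
    have hBS : ∀ x ∈ B, x ∉ S := by
      rintro x ⟨hxT, hxM⟩ hxS
      exact not_mem_self_qCompl hne (⟨hxS, hxT⟩ : x ∈ S ∩ T) hxM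
    set D := qCompl q S ∩ B with hD
    have hDq : D ∈ qSubsets q :=
      inter_mem_qSubsets hsymm (qCompl_mem_qSubsets hsymm _) hBq
    have hDsub : D ⊆ B := Set.inter_subset_right
    set R := qCompl q D ∩ B with hR
    have hRq : R ∈ qSubsets q :=
      inter_mem_qSubsets hsymm (qCompl_mem_qSubsets hsymm _) hBq
    have hRempty : R = ∅ := by
      apply hH R hRq
      rintro x ⟨hxD, hxB⟩
      refine ⟨trivial, ?_⟩
      rintro (hxS | hxSc)
      · exact hBS x hxB hxS
      · exact not_mem_self_qCompl hne (⟨hxSc, hxB⟩ : x ∈ D) hxD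
    -- by heredity, D = (Dᶜ ∩ B)ᶜ ∩ B = ∅ᶜ ∩ B = B
    have hDeq : D = qCompl q (qCompl q D ∩ B) ∩ B :=
      ((hhered B hBq D).mp ⟨hDq, hDsub⟩).2
    rw [← hR, hRempty, qCompl_empty, Set.univ_inter] at hDeq
    -- so B ⊆ qCompl q S
    have hBSc : B ⊆ qCompl q S := by
      rw [← hDeq]; exact Set.inter_subset_left
    -- hence S ⊆ qCompl q B, which gives the commutation
    have hfin : S ⊆ qCompl q B := by
      rw [hS]; exact qCompl_anti hBSc
    intro x hx
    exact hfin hx.1
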